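/- arXiv:1910.08425 — 2 statements merged into one kernel-verified Lean document; each statement's English description precedes it below -/
import Mathlib

section
/- Let L > 0, γ > 0, β₂ > 0, let ρ : ℝ → ℝ be continuously differentiable with |ρ'(x)| ≤ β₂ for all x, let f : ℝ × [0,∞) → ℂ be continuous, and let u be a classical solution of i∂_t u + (1/2)∂_x²u + |u|²u = f − iγu on (−L,L)×(0,∞) with u(±L,t) = 0 for all t ≥ 0. Assume the uniform bounds: ∫_{−L}^{L} |∂_x u(x,t)|² dx ≤ R for all t ≥ 0, and ∫_{−L}^{L} ρ(x)²|f(x,t)|² dx ≤ S for all t ≥ 0. Then, with M₀ = (2/γ²)(Rβ₂² + S), the weighted mass satisfies ∫_{−L}^{L} ρ²|u(x,t)|² dx ≤ (∫_{−L}^{L} ρ²|u(x,0)|² dx)·e^{−γt} + M₀(1 − e^{−γt}) for all t ≥ 0; in particular ∫_{−L}^{L} ρ²|u(x,t)|² dx ≤ ∫_{−L}^{L} ρ²|u(x,0)|² dx + M₀ uniformly in t and L. -/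
/-!
Write `m(t) = ∫ ρ²|u|²`. Substituting the equation into `m' = 2 ∫ ρ² Re(ū u_t)` gives
`m' = -∫ ρ² Im(ū u_xx) + 2 ∫ ρ² Im(ū f) - 2γ m`, the cubic term being purely imaginary. Integrating
by parts, with vanishing boundary terms and `Im(ū_x u_x) = 0`, the first integral becomes
`∫ 2ρρ' Im(ū u_x)`, which is controlled by `β₂ ∫ |ρ u| |u_x|`. Young's inequality on this and on the
forcing term leaves `m' ≤ -γ m + γ M₀`, so `(m - M₀) e^{γt}` is nonincreasing.
-/

open MeasureTheory Set Filter Topology Complex ComplexConjugate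
open scoped InnerProductSpace Interval
open intervalIntegral

section ParametricIntegral

variable {E : Type*} [NormedAddCommGroup E] [NormedSpace ℝ E] {G G' : ℝ → ℝ → E} {a b : ℝ}
  {K : Set ℝ}

lemma continuousOn_intervalIntegral_of_continuousOn_prod (hab : a ≤ b) (hK : IsCompact K)
    (hG : ContinuousOn (fun p : ℝ × ℝ => G p.1 p.2) (Icc a b ×ˢ K)) :
    ContinuousOn (fun t => ∫ x in a..b, G x t) K := by
  intro t₀ ht₀
  obtain ⟨C, hC⟩ := (isCompact_Icc.prod hK).exists_bound_of_continuousOn hG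
  have hIoc : Ι a b ⊆ Icc a b := by rw [uIoc_of_le hab]; exact Ioc_subset_Icc_self
  refine continuousWithinAt_of_dominated_interval (bound := fun _ => C)
    (eventually_nhdsWithin_of_forall fun t ht =>
      ((hG.uncurry_right t ht).intervalIntegrable_of_Icc hab).def'.aestronglyMeasurable)
    (eventually_nhdsWithin_of_forall fun t ht =>
      Eventually.of_forall fun x hx => hC (x, t) ⟨hIoc hx, ht⟩)
    intervalIntegrable_const (Eventually.of_forall fun x hx => ?_)
  exact (hG (x, t₀) ⟨hIoc hx, ht₀⟩).comp
    (continuous_const.prodMk continuous_id).continuousWithinAt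
    fun t ht => ⟨hIoc hx, ht⟩

lemma hasDerivAt_intervalIntegral_of_continuousOn_prod {t₀ : ℝ} (hab : a ≤ b) (hK : IsCompact K)
    (hKt₀ : K ∈ 𝓝 t₀) (hG : ContinuousOn (fun p : ℝ × ℝ => G p.1 p.2) (Icc a b ×ˢ K))
    (hG' : ContinuousOn (fun p : ℝ × ℝ => G' p.1 p.2) (Icc a b ×ˢ K))
    (hderiv : ∀ x ∈ Icc a b, ∀ t ∈ K, HasDerivAt (G x ·) (G' x t) t) :
    HasDerivAt (fun t => ∫ x in a..b, G x t) (∫ x in a..b, G' x t₀) t₀ := by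
  obtain ⟨C, hC⟩ := (isCompact_Icc.prod hK).exists_bound_of_continuousOn hG'
  have hIoc : Ι a b ⊆ Icc a b := by rw [uIoc_of_le hab]; exact Ioc_subset_Icc_self
  have ht₀ : t₀ ∈ K := mem_of_mem_nhds hKt₀
  exact (hasDerivAt_integral_of_dominated_loc_of_deriv_le (bound := fun _ => C)
    (F := fun t x => G x t) (F' := fun t x => G' x t) hKt₀
    (eventually_of_mem hKt₀ fun t ht =>
      ((hG.uncurry_right t ht).intervalIntegrable_of_Icc hab).def'.aestronglyMeasurable)
    ((hG.uncurry_right t₀ ht₀).intervalIntegrable_of_Icc hab)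
    ((hG'.uncurry_right t₀ ht₀).intervalIntegrable_of_Icc hab).def'.aestronglyMeasurable
    (Eventually.of_forall fun x hx t ht => hC (x, t) ⟨hIoc hx, ht⟩) intervalIntegrable_const
    (Eventually.of_forall fun x hx t ht => hderiv x (hIoc hx) t ht)).2

lemma hasDerivAt_integral_sq_mul_norm_sq {F : Type*} [NormedAddCommGroup F]
    [InnerProductSpace ℝ F] {ρ : ℝ → ℝ} {u u' : ℝ → ℝ → F} {t₀ : ℝ} (hab : a ≤ b)
    (hK : IsCompact K) (hKt₀ : K ∈ 𝓝 t₀) (hρ : Continuous ρ)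
    (hu : ContinuousOn (fun p : ℝ × ℝ => u p.1 p.2) (Icc a b ×ˢ K))
    (hu' : ContinuousOn (fun p : ℝ × ℝ => u' p.1 p.2) (Icc a b ×ˢ K))
    (hderiv : ∀ x ∈ Icc a b, ∀ t ∈ K, HasDerivAt (u x ·) (u' x t) t) :
    HasDerivAt (fun t => ∫ x in a..b, ρ x ^ 2 * ‖u x t‖ ^ 2)
      (∫ x in a..b, ρ x ^ 2 * (2 * ⟪u x t₀, u' x t₀⟫_ℝ)) t₀ :=
  hasDerivAt_intervalIntegral_of_continuousOn_prod hab hK hKt₀ (by fun_prop) (by fun_prop)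
    fun x hx t ht => (hderiv x hx t ht).norm_sq.const_mul _

end ParametricIntegral

lemma le_exp_decay_of_hasDerivAt_le {y y' : ℝ → ℝ} {γ M T : ℝ} (hT : 0 ≤ T)
    (hy : ContinuousOn y (Icc 0 T)) (hy' : ∀ s ∈ Ioo 0 T, HasDerivAt y (y' s) s)
    (hle : ∀ s ∈ Ioo 0 T, y' s ≤ -γ * y s + γ * M) :
    y T ≤ y 0 * Real.exp (-γ * T) + M * (1 - Real.exp (-γ * T)) := by
  have hφ' (s : ℝ) (hs : s ∈ Ioo 0 T) : HasDerivAt (fun s => (y s - M) * Real.exp (γ * s))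
      ((y' s + γ * (y s - M)) * Real.exp (γ * s)) s :=
    (((hy' s hs).sub_const M).mul ((hasDerivAt_id' s).const_mul γ).exp).congr_deriv (by ring)
  have hanti : AntitoneOn (fun s => (y s - M) * Real.exp (γ * s)) (Icc 0 T) := by
    refine antitoneOn_of_deriv_nonpos (convex_Icc 0 T) (by fun_prop) ?_ ?_ <;>
      rw [interior_Icc]
    · exact fun s hs => (hφ' s hs).differentiableAt.differentiableWithinAt
    · intro s hs
      rw [(hφ' s hs).deriv]
      exact mul_nonpos_of_nonpos_of_nonneg (by linarith [hle s hs]) (Real.exp_pos _).le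
  have hmono := hanti (left_mem_Icc.2 hT) (right_mem_Icc.2 hT) hT
  have hexp : Real.exp (γ * T) * Real.exp (-γ * T) = 1 := by
    rw [← Real.exp_add]; ring_nf; exact Real.exp_zero
  simp only [mul_zero, Real.exp_zero, mul_one] at hmono
  have := mul_le_mul_of_nonneg_right hmono (Real.exp_pos (-γ * T)).le
  rw [mul_assoc, hexp, mul_one] at this
  linarith

lemma two_mul_le_mul_sq_add_div_mul_sq {γ : ℝ} (hγ : 0 < γ) (X Y : ℝ) :
    2 * X * Y ≤ γ / 2 * X ^ 2 + 2 / γ * Y ^ 2 := by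
  have : γ / 2 * X ^ 2 + 2 / γ * Y ^ 2 - 2 * X * Y = (γ * X - 2 * Y) ^ 2 / (2 * γ) := by
    field_simp; ring
  nlinarith [div_nonneg (sq_nonneg (γ * X - 2 * Y)) (by positivity : (0 : ℝ) ≤ 2 * γ)]

lemma two_inner_eq_of_damped_nls {γ : ℝ} {c d e g : ℂ}
    (h : I * d + (1 / 2 : ℂ) * e + (‖c‖ : ℂ) ^ 2 * c = g - I * (γ : ℂ) * c) :
    2 * ⟪c, d⟫_ℝ = -(conj c * e).im + 2 * (conj c * g).im - 2 * γ * ‖c‖ ^ 2 := by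
  have hd : d = -I * (g - I * γ * c - (1 / 2 : ℂ) * e - (‖c‖ : ℂ) ^ 2 * c) := by
    linear_combination (-I) * h + d * I_sq
  rw [hd, ← ofReal_pow, Complex.sq_norm, normSq_apply]
  simp only [Complex.inner, mul_re, mul_im, sub_re, sub_im, neg_re, neg_im, I_re, I_im,
    conj_re, conj_im, ofReal_re, ofReal_im]
  norm_num
  ring

lemma weighted_energy_integrand_le {γ β r r' : ℝ} {c c' g : ℂ} (hγ : 0 < γ) (hr' : |r'| ≤ β) :
    2 * r * r' * (conj c * c').im + r ^ 2 * (2 * (conj c * g).im - 2 * γ * ‖c‖ ^ 2)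
      ≤ -γ * (r ^ 2 * ‖c‖ ^ 2) + 2 * β ^ 2 / γ * ‖c'‖ ^ 2 + 2 / γ * (r ^ 2 * ‖g‖ ^ 2) := by
  have him (z w : ℂ) : |(conj z * w).im| ≤ ‖z‖ * ‖w‖ :=
    (abs_im_le_norm _).trans_eq (by rw [norm_mul, RCLike.norm_conj])
  have h₁ : 2 * r * r' * (conj c * c').im ≤ 2 * (|r| * ‖c‖) * (β * ‖c'‖) := by
    calc 2 * r * r' * (conj c * c').im ≤ 2 * |r| * |r'| * |(conj c * c').im| := by
          simpa only [abs_mul, abs_two] using le_abs_self (2 * r * r' * (conj c * c').im)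
      _ ≤ 2 * |r| * β * (‖c‖ * ‖c'‖) :=
          mul_le_mul (by gcongr) (him c c') (abs_nonneg _)
            (mul_nonneg (by positivity) ((abs_nonneg r').trans hr'))
      _ = _ := by ring
  have h₂ : r ^ 2 * (2 * (conj c * g).im) ≤ 2 * (|r| * ‖c‖) * (|r| * ‖g‖) := by
    calc r ^ 2 * (2 * (conj c * g).im) ≤ r ^ 2 * (2 * (‖c‖ * ‖g‖)) := by
          gcongr; exact (le_abs_self _).trans (him c g)
      _ = _ := by rw [← sq_abs r]; ring
  have y₁ := two_mul_le_mul_sq_add_div_mul_sq hγ (|r| * ‖c‖) (β * ‖c'‖)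
  have y₂ := two_mul_le_mul_sq_add_div_mul_sq hγ (|r| * ‖c‖) (|r| * ‖g‖)
  simp only [mul_pow, sq_abs] at y₁ y₂
  have : 2 / γ * (β ^ 2 * ‖c'‖ ^ 2) = 2 * β ^ 2 / γ * ‖c'‖ ^ 2 := by ring
  linarith

lemma integral_sq_mul_im_conj_mul_deriv_deriv {ρ ρ' : ℝ → ℝ} {v v' v'' : ℝ → ℂ} {a b : ℝ}
    (hab : a ≤ b) (hρ : ∀ x ∈ Icc a b, HasDerivAt ρ (ρ' x) x) (hρ' : ContinuousOn ρ' (Icc a b))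
    (hv : ∀ x ∈ Icc a b, HasDerivAt v (v' x) x) (hv' : ∀ x ∈ Icc a b, HasDerivAt v' (v'' x) x)
    (hv'' : ContinuousOn v'' (Icc a b)) (ha : v a = 0) (hb : v b = 0) :
    ∫ x in a..b, ρ x ^ 2 * (conj (v x) * v'' x).im
      = -∫ x in a..b, 2 * ρ x * ρ' x * (conj (v x) * v' x).im := by
  have hρc : ContinuousOn ρ (Icc a b) := fun x hx => (hρ x hx).continuousAt.continuousWithinAt
  have hvc : ContinuousOn v (Icc a b) := fun x hx => (hv x hx).continuousAt.continuousWithinAt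
  have hv'c : ContinuousOn v' (Icc a b) := fun x hx => (hv' x hx).continuousAt.continuousWithinAt
  have hI₁ : IntervalIntegrable (fun x => 2 * ρ x * ρ' x * (conj (v x) * v' x).im) volume a b :=
    ContinuousOn.intervalIntegrable_of_Icc hab (by fun_prop)
  have hI₂ : IntervalIntegrable (fun x => ρ x ^ 2 * (conj (v x) * v'' x).im) volume a b :=
    ContinuousOn.intervalIntegrable_of_Icc hab (by fun_prop)
  have hderiv (x : ℝ) (hx : x ∈ uIcc a b) : HasDerivAt (fun x => ρ x ^ 2 * (conj (v x) * v' x).im)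
      (2 * ρ x * ρ' x * (conj (v x) * v' x).im + ρ x ^ 2 * (conj (v x) * v'' x).im) x := by
    rw [uIcc_of_le hab] at hx
    have him := imCLM.hasFDerivAt.comp_hasDerivAt x ((hv x hx).star.mul (hv' x hx))
    refine (((hρ x hx).pow 2).mul him).congr_deriv ?_
    -- `conj v' * v'` is real
    simp only [Function.comp_apply, Pi.mul_apply, Pi.pow_apply, imCLM_apply, add_im, mul_im,
      star_def, conj_re, conj_im]
    ring
  have := integral_eq_sub_of_hasDerivAt hderiv (hI₁.add hI₂)
  rw [integral_add hI₁ hI₂, ha, hb] at this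
  simp only [map_zero, zero_mul, zero_im, mul_zero, sub_self] at this
  linarith

lemma integral_two_inner_le_of_damped_nls {ρ ρ' : ℝ → ℝ} {v v' v'' w g : ℝ → ℂ} {a b γ β : ℝ}
    (hab : a ≤ b) (hγ : 0 < γ) (hρ : ∀ x ∈ Icc a b, HasDerivAt ρ (ρ' x) x)
    (hρ' : ContinuousOn ρ' (Icc a b)) (hρ'β : ∀ x ∈ Icc a b, |ρ' x| ≤ β)
    (hv : ∀ x ∈ Icc a b, HasDerivAt v (v' x) x) (hv' : ∀ x ∈ Icc a b, HasDerivAt v' (v'' x) x)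
    (hv'' : ContinuousOn v'' (Icc a b)) (ha : v a = 0) (hb : v b = 0)
    (hg : ContinuousOn g (Icc a b))
    (hnls : ∀ x ∈ Ioo a b,
      I * w x + (1 / 2 : ℂ) * v'' x + (‖v x‖ : ℂ) ^ 2 * v x = g x - I * (γ : ℂ) * v x) :
    ∫ x in a..b, ρ x ^ 2 * (2 * ⟪v x, w x⟫_ℝ)
      ≤ -γ * (∫ x in a..b, ρ x ^ 2 * ‖v x‖ ^ 2) + 2 * β ^ 2 / γ * (∫ x in a..b, ‖v' x‖ ^ 2)
        + 2 / γ * (∫ x in a..b, ρ x ^ 2 * ‖g x‖ ^ 2) := by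
  have hρc : ContinuousOn ρ (Icc a b) := fun x hx => (hρ x hx).continuousAt.continuousWithinAt
  have hvc : ContinuousOn v (Icc a b) := fun x hx => (hv x hx).continuousAt.continuousWithinAt
  have hv'c : ContinuousOn v' (Icc a b) := fun x hx => (hv' x hx).continuousAt.continuousWithinAt
  set A := fun x => 2 * ρ x * ρ' x * (conj (v x) * v' x).im
  set B := fun x => ρ x ^ 2 * (conj (v x) * v'' x).im
  set C := fun x => ρ x ^ 2 * (2 * (conj (v x) * g x).im - 2 * γ * ‖v x‖ ^ 2)
  have hA : IntervalIntegrable A volume a b :=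
    ContinuousOn.intervalIntegrable_of_Icc hab (by fun_prop)
  have hB : IntervalIntegrable B volume a b :=
    ContinuousOn.intervalIntegrable_of_Icc hab (by fun_prop)
  have hC : IntervalIntegrable C volume a b :=
    ContinuousOn.intervalIntegrable_of_Icc hab (by fun_prop)
  have hv2 : IntervalIntegrable (fun x => ρ x ^ 2 * ‖v x‖ ^ 2) volume a b :=
    ContinuousOn.intervalIntegrable_of_Icc hab (by fun_prop)
  have hv'2 : IntervalIntegrable (fun x => ‖v' x‖ ^ 2) volume a b :=
    ContinuousOn.intervalIntegrable_of_Icc hab (by fun_prop)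
  have hg2 : IntervalIntegrable (fun x => ρ x ^ 2 * ‖g x‖ ^ 2) volume a b :=
    ContinuousOn.intervalIntegrable_of_Icc hab (by fun_prop)
  have hnls_ae : ∀ᵐ x, x ∈ Ι a b → ρ x ^ 2 * (2 * ⟪v x, w x⟫_ℝ) = C x - B x := by
    filter_upwards [(countable_singleton b).ae_notMem volume] with x hxb hx
    rw [uIoc_of_le hab] at hx
    rw [two_inner_eq_of_damped_nls (hnls x ⟨hx.1, hx.2.lt_of_ne (by simpa using hxb)⟩)]
    ring
  calc ∫ x in a..b, ρ x ^ 2 * (2 * ⟪v x, w x⟫_ℝ)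
      = (∫ x in a..b, C x) - ∫ x in a..b, B x := by
        rw [integral_congr_ae hnls_ae, integral_sub hC hB]
    _ = ∫ x in a..b, (A x + C x) := by
        rw [integral_add hA hC,
          integral_sq_mul_im_conj_mul_deriv_deriv hab hρ hρ' hv hv' hv'' ha hb]
        ring
    _ ≤ ∫ x in a..b, (-γ * (ρ x ^ 2 * ‖v x‖ ^ 2) + 2 * β ^ 2 / γ * ‖v' x‖ ^ 2
          + 2 / γ * (ρ x ^ 2 * ‖g x‖ ^ 2)) :=
        integral_mono_on hab (hA.add hC) (((hv2.const_mul _).add (hv'2.const_mul _)).add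
          (hg2.const_mul _)) fun x hx => weighted_energy_integrand_le hγ (hρ'β x hx)
    _ = _ := by
        rw [integral_add ((hv2.const_mul _).add (hv'2.const_mul _)) (hg2.const_mul _),
          integral_add (hv2.const_mul _) (hv'2.const_mul _)]
        simp only [intervalIntegral.integral_const_mul]

theorem weighted_mass_uniform_bound_general
    (L γ β₂ : ℝ) (hL : 0 < L) (hγ : 0 < γ)
    (ρ ρ' : ℝ → ℝ)
    (hρ : ∀ x, HasDerivAt ρ (ρ' x) x) (hρ'c : Continuous ρ')
    (hρ'b : ∀ x, |ρ' x| ≤ β₂)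
    (f : ℝ → ℝ → ℂ)
    (hf : ContinuousOn (fun p : ℝ × ℝ => f p.1 p.2) (Set.univ ×ˢ Set.Ici 0))
    (u ut ux uxx : ℝ → ℝ → ℂ)
    (hu_cont : ContinuousOn (fun p : ℝ × ℝ => u p.1 p.2) (Set.Icc (-L) L ×ˢ Set.Ici 0))
    (hut_cont : ContinuousOn (fun p : ℝ × ℝ => ut p.1 p.2) (Set.Icc (-L) L ×ˢ Set.Ici 0))
    (huxx_cont : ContinuousOn (fun p : ℝ × ℝ => uxx p.1 p.2) (Set.Icc (-L) L ×ˢ Set.Ici 0))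
    (hut : ∀ x ∈ Set.Icc (-L) L, ∀ t > (0:ℝ), HasDerivAt (fun s => u x s) (ut x t) t)
    (hux : ∀ x ∈ Set.Icc (-L) L, ∀ t ≥ (0:ℝ), HasDerivAt (fun y => u y t) (ux x t) x)
    (huxx : ∀ x ∈ Set.Icc (-L) L, ∀ t ≥ (0:ℝ), HasDerivAt (fun y => ux y t) (uxx x t) x)
    (hPDE : ∀ x ∈ Set.Ioo (-L) L, ∀ t > (0:ℝ),
      Complex.I * ut x t + (1/2 : ℂ) * uxx x t + (‖u x t‖ : ℂ)^2 * u x t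
        = f x t - Complex.I * (γ : ℂ) * u x t)
    (hBC : ∀ t ≥ (0:ℝ), u (-L) t = 0 ∧ u L t = 0)
    (R S : ℝ)
    (hR : ∀ t ≥ (0:ℝ), (∫ x in (-L)..L, ‖ux x t‖^2) ≤ R)
    (hS : ∀ t ≥ (0:ℝ), (∫ x in (-L)..L, (ρ x)^2 * ‖f x t‖^2) ≤ S)
    (M₀ : ℝ) (hM₀ : M₀ = (2/γ^2) * (R * β₂^2 + S)) :
    ∀ t ≥ (0:ℝ),
      (∫ x in (-L)..L, (ρ x)^2 * ‖u x t‖^2)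
          ≤ (∫ x in (-L)..L, (ρ x)^2 * ‖u x 0‖^2) * Real.exp (-γ * t)
            + M₀ * (1 - Real.exp (-γ * t)) ∧
      (∫ x in (-L)..L, (ρ x)^2 * ‖u x t‖^2)
          ≤ (∫ x in (-L)..L, (ρ x)^2 * ‖u x 0‖^2) + M₀ := by
  intro T hT
  have hLL : -L ≤ L := by linarith
  have hρc : Continuous ρ := continuous_iff_continuousAt.2 fun x => (hρ x).continuousAt
  have hderiv (s : ℝ) (hs : 0 < s) :
      HasDerivAt (fun t => ∫ x in (-L)..L, ρ x ^ 2 * ‖u x t‖ ^ 2)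
        (∫ x in (-L)..L, ρ x ^ 2 * (2 * ⟪u x s, ut x s⟫_ℝ)) s := by
    have hK : Icc (s / 2) (2 * s) ⊆ Ioi 0 := fun t ht => by simp only [mem_Ioi]; linarith [ht.1]
    have hsK := Set.prod_mono_right (s := Icc (-L) L) (hK.trans Ioi_subset_Ici_self)
    exact hasDerivAt_integral_sq_mul_norm_sq hLL isCompact_Icc
      (Icc_mem_nhds (by linarith) (by linarith)) hρc (hu_cont.mono hsK) (hut_cont.mono hsK)
      fun x hx t ht => hut x hx t (hK ht)
  have hineq (s : ℝ) (hs : 0 < s) :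
      ∫ x in (-L)..L, ρ x ^ 2 * (2 * ⟪u x s, ut x s⟫_ℝ)
        ≤ -γ * (∫ x in (-L)..L, ρ x ^ 2 * ‖u x s‖ ^ 2) + γ * M₀ := by
    calc _ ≤ -γ * (∫ x in (-L)..L, ρ x ^ 2 * ‖u x s‖ ^ 2)
            + 2 * β₂ ^ 2 / γ * (∫ x in (-L)..L, ‖ux x s‖ ^ 2)
            + 2 / γ * (∫ x in (-L)..L, ρ x ^ 2 * ‖f x s‖ ^ 2) :=
          integral_two_inner_le_of_damped_nls hLL hγ (fun x _ => hρ x) hρ'c.continuousOn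
            (fun x _ => hρ'b x) (fun x hx => hux x hx s hs.le) (fun x hx => huxx x hx s hs.le)
            (huxx_cont.uncurry_right s hs.le) (hBC s hs.le).1 (hBC s hs.le).2
            ((hf.uncurry_right s hs.le).mono (subset_univ _)) fun x hx => hPDE x hx s hs
      _ ≤ -γ * (∫ x in (-L)..L, ρ x ^ 2 * ‖u x s‖ ^ 2) + 2 * β₂ ^ 2 / γ * R + 2 / γ * S := by
          gcongr
          exacts [hR s hs.le, hS s hs.le]
      _ = _ := by rw [hM₀]; field_simp; ring
  have hu_Icc := hu_cont.mono (Set.prod_mono_right (Icc_subset_Ici_self : Icc 0 T ⊆ Ici 0))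
  have hdecay := le_exp_decay_of_hasDerivAt_le hT
    (continuousOn_intervalIntegral_of_continuousOn_prod hLL isCompact_Icc (by fun_prop))
    (fun s hs => hderiv s hs.1) fun s hs => hineq s hs.1
  refine ⟨hdecay, ?_⟩
  have hM₀_nonneg : 0 ≤ M₀ := by
    have hR₀ := (integral_nonneg hLL fun x _ => by positivity).trans (hR 0 le_rfl)
    have hS₀ := (integral_nonneg hLL fun x _ => by positivity).trans (hS 0 le_rfl)
    rw [hM₀]; positivity
  have hmass₀ : 0 ≤ ∫ x in (-L)..L, ρ x ^ 2 * ‖u x 0‖ ^ 2 :=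
    integral_nonneg hLL fun x _ => by positivity
  have hexp_le : Real.exp (-γ * T) ≤ 1 := Real.exp_le_one_iff.2 (by nlinarith)
  nlinarith [Real.exp_pos (-γ * T)]

/-- Uniform (in `t` and `L`) weighted `L²` estimate (Lemma 2.1):
for a classical solution of the damped driven NLS on `(-L,L) × (0,∞)` with
Dirichlet boundary conditions, under the uniform bounds `∫|uₓ|² ≤ R` and
`∫ρ²|f|² ≤ S`, the weighted mass satisfies
`∫ρ²|u(t)|² ≤ (∫ρ²|u(0)|²) e^{-γt} + M₀(1-e^{-γt})` with
`M₀ = (2/γ²)(Rβ₂² + S)`; in particular `∫ρ²|u(t)|² ≤ ∫ρ²|u(0)|² + M₀`. -/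
theorem weighted_mass_uniform_bound
    (L γ β₂ : ℝ) (hL : 0 < L) (hγ : 0 < γ) (hβ₂ : 0 < β₂)
    (ρ ρ' : ℝ → ℝ) (hρpos : ∀ x, 0 < ρ x)
    (hρ : ∀ x, HasDerivAt ρ (ρ' x) x) (hρ'c : Continuous ρ')
    (hρ'b : ∀ x, |ρ' x| ≤ β₂)
    (f : ℝ → ℝ → ℂ)
    (hf : ContinuousOn (fun p : ℝ × ℝ => f p.1 p.2) (Set.univ ×ˢ Set.Ici 0))
    (u ut ux uxx : ℝ → ℝ → ℂ)
    (hu_cont : ContinuousOn (fun p : ℝ × ℝ => u p.1 p.2) (Set.Icc (-L) L ×ˢ Set.Ici 0))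
    (hut_cont : ContinuousOn (fun p : ℝ × ℝ => ut p.1 p.2) (Set.Icc (-L) L ×ˢ Set.Ici 0))
    (hux_cont : ContinuousOn (fun p : ℝ × ℝ => ux p.1 p.2) (Set.Icc (-L) L ×ˢ Set.Ici 0))
    (huxx_cont : ContinuousOn (fun p : ℝ × ℝ => uxx p.1 p.2) (Set.Icc (-L) L ×ˢ Set.Ici 0))
    (hut : ∀ x ∈ Set.Icc (-L) L, ∀ t > (0:ℝ), HasDerivAt (fun s => u x s) (ut x t) t)
    (hux : ∀ x ∈ Set.Icc (-L) L, ∀ t ≥ (0:ℝ), HasDerivAt (fun y => u y t) (ux x t) x)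
    (huxx : ∀ x ∈ Set.Icc (-L) L, ∀ t ≥ (0:ℝ), HasDerivAt (fun y => ux y t) (uxx x t) x)
    (hPDE : ∀ x ∈ Set.Ioo (-L) L, ∀ t > (0:ℝ),
      Complex.I * ut x t + (1/2 : ℂ) * uxx x t + (‖u x t‖ : ℂ)^2 * u x t
        = f x t - Complex.I * (γ : ℂ) * u x t)
    (hBC : ∀ t ≥ (0:ℝ), u (-L) t = 0 ∧ u L t = 0)
    (R S : ℝ)
    (hR : ∀ t ≥ (0:ℝ), (∫ x in (-L)..L, ‖ux x t‖^2) ≤ R)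
    (hS : ∀ t ≥ (0:ℝ), (∫ x in (-L)..L, (ρ x)^2 * ‖f x t‖^2) ≤ S)
    (M₀ : ℝ) (hM₀ : M₀ = (2/γ^2) * (R * β₂^2 + S)) :
    ∀ t ≥ (0:ℝ),
      (∫ x in (-L)..L, (ρ x)^2 * ‖u x t‖^2)
          ≤ (∫ x in (-L)..L, (ρ x)^2 * ‖u x 0‖^2) * Real.exp (-γ * t)
            + M₀ * (1 - Real.exp (-γ * t)) ∧
      (∫ x in (-L)..L, (ρ x)^2 * ‖u x t‖^2)
          ≤ (∫ x in (-L)..L, (ρ x)^2 * ‖u x 0‖^2) + M₀ :=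
  weighted_mass_uniform_bound_general L γ β₂ hL hγ ρ ρ' hρ hρ'c hρ'b f hf u ut ux uxx hu_cont
    hut_cont huxx_cont hut hux huxx hPDE hBC R S hR hS M₀ hM₀
end

section
/- Let L > 0, γ > 0, β₂ > 0, let ρ : ℝ → ℝ be continuously differentiable with |ρ'(x)| ≤ β₂, let f : ℝ × [0,∞) → ℂ be continuous with jointly continuous time derivative ∂_t f, and let u be a classical solution of i∂_t u + (1/2)∂_x²u + |u|²u = f − iγu on (−L,L)×(0,∞) (with u, ∂_t u, ∂_x u, ∂_x²u, ∂_t∂_x u jointly continuous) satisfying u(±L,t) = ∂_x u(±L,t) = 0 for all t ≥ 0. Assume the uniform bounds ∫_{−L}^{L}|u|²dx ≤ R, ∫_{−L}^{L}|∂_t u|²dx ≤ R', sup_x |u(x,t)|² ≤ R'', and ∫_{−L}^{L}ρ²|u|²dx ≤ R₀ for all t ≥ 0. Define J(t) = (1/4)∫_{−L}^{L}ρ²|∂_x u|²dx − (1/4)∫_{−L}^{L}ρ²|u|⁴dx + Re∫_{−L}^{L}ρ² f conj(u) dx. Then J is differentiable and satisfies, for all t > 0, J'(t) + γJ(t) +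 (γ/8)∫_{−L}^{L}ρ²|∂_x u(x,t)|²dx ≤ 4β₂²R'/γ + 4β₂²γR + (3γR''R₀)/4 + R₀/2 + (1/2)∫_{−L}^{L}ρ(x)²|∂_t f(x,t)|²dx. -/
/-!
Differentiating under the integral sign gives
`J' = ∫ ρ² (Re(∂ₜuₓ ūₓ)/2 - |u|² Re(uₜ ū) + Re(f ūₜ) + Re(fₜ ū))`.
The equation says `i (uₜ + γu) = f - uₓₓ/2 - |u|²u`, so
`Re((uₜ + γu) conj(f - uₓₓ/2 - |u|²u)) = 0`. Subtracting `ρ²` times this from the integrand of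
`J' + γJ + (γ/8)∫ρ²|uₓ|²` leaves the `x`-derivative of the flux `ρ² Re(uₜ ūₓ + γ u ūₓ)/2`,
which integrates to zero since `uₓ(±L) = 0`, plus
`ρ² Re(fₜ ū) - ρρ' Re(uₜ ūₓ + γ u ūₓ) + (3γ/4)ρ²|u|⁴ - (γ/8)ρ²|uₓ|²`. Young's inequality
(with `|ρ'| ≤ β₂`) and `|u|⁴ ≤ R''|u|²` bound this pointwise by the right-hand side integrand.
-/

open MeasureTheory Set Filter Topology intervalIntegral
open scoped RealInnerProductSpace Interval

section Calculus

variable {E : Type*} [NormedAddCommGroup E] [NormedSpace ℝ E]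

theorem hasDerivAt_intervalIntegral_of_continuousOn {F F' : ℝ → ℝ → E} {a b t : ℝ}
    {I : Set ℝ} (hI : IsOpen I) (ht : t ∈ I)
    (hF : ContinuousOn (fun p : ℝ × ℝ => F p.1 p.2) ([[a, b]] ×ˢ I))
    (hF' : ContinuousOn (fun p : ℝ × ℝ => F' p.1 p.2) ([[a, b]] ×ˢ I))
    (hd : ∀ x ∈ [[a, b]], ∀ s ∈ I, HasDerivAt (F x) (F' x s) s) :
    HasDerivAt (fun s => ∫ x in a..b, F x s) (∫ x in a..b, F' x t) t := by
  obtain ⟨ε, hε, hεI⟩ := Metric.nhds_basis_closedBall.mem_iff.1 (hI.mem_nhds ht)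
  have hball : Metric.ball t ε ⊆ I := Metric.ball_subset_closedBall.trans hεI
  obtain ⟨M, hM⟩ := (isCompact_uIcc.prod (isCompact_closedBall t ε)).exists_bound_of_continuousOn
    (hF'.mono (prod_mono subset_rfl hεI))
  have hmeas : ∀ G : ℝ → E, ContinuousOn G [[a, b]] →
      AEStronglyMeasurable G (volume.restrict (Ι a b)) := fun G hG =>
    (hG.mono uIoc_subset_uIcc).aestronglyMeasurable measurableSet_uIoc
  refine (hasDerivAt_integral_of_dominated_loc_of_deriv_le (F := fun s x => F x s)
    (F' := fun s x => F' x s) (bound := fun _ => M)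
    (Metric.ball_mem_nhds t hε) ?_ ((hF.uncurry_right t ht).intervalIntegrable)
    (hmeas (F' · t) (hF'.uncurry_right t ht)) ?_ intervalIntegrable_const ?_).2
  · filter_upwards [Metric.ball_mem_nhds t hε] with s hs
    exact hmeas (F · s) (hF.uncurry_right s (hball hs))
  · exact .of_forall fun x hx s hs =>
      hM (x, s) ⟨uIoc_subset_uIcc hx, Metric.ball_subset_closedBall hs⟩
  · exact .of_forall fun x hx s hs => hd x (uIoc_subset_uIcc hx) s (hball hs)

variable [CompleteSpace E]

theorem hasDerivAt_swap_partials {u ut ux utx : ℝ → ℝ → E} {a b t x : ℝ}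
    {I : Set ℝ} (hI : IsOpen I) (ht : t ∈ I)
    (hux_cont : ContinuousOn (fun p : ℝ × ℝ => ux p.1 p.2) (Icc a b ×ˢ I))
    (hutx_cont : ContinuousOn (fun p : ℝ × ℝ => utx p.1 p.2) (Icc a b ×ˢ I))
    (hut : ∀ y ∈ Icc a b, ∀ s ∈ I, HasDerivAt (u y) (ut y s) s)
    (hux : ∀ y ∈ Icc a b, ∀ s ∈ I, HasDerivAt (u · s) (ux y s) y)
    (hutx : ∀ y ∈ Icc a b, ∀ s ∈ I, HasDerivAt (ux y) (utx y s) s)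
    (hx : x ∈ Ioo a b) :
    HasDerivAt (ut · t) (utx x t) x := by
  have hsub : ∀ y ∈ Icc a b, [[a, y]] ⊆ Icc a b := fun y hy => by
    rw [uIcc_of_le hy.1]; exact Icc_subset_Icc_right hy.2
  have ha : a ∈ Icc a b := left_mem_Icc.2 (hx.1.trans hx.2).le
  -- `ut y t - ut a t` is the time derivative of `∫ z in a..y, ux z t`
  have hut_eq : ∀ y ∈ Icc a b, ut y t = ut a t + ∫ z in a..y, utx z t := by
    intro y hy
    have hFTC : ∀ s ∈ I, u y s - u a s = ∫ z in a..y, ux z s := fun s hs =>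
      (integral_eq_sub_of_hasDerivAt (fun z hz => hux z (hsub y hy hz) s hs)
        ((hux_cont.uncurry_right s hs).mono (hsub y hy)).intervalIntegrable).symm
    have hderiv : HasDerivAt (fun s => ∫ z in a..y, ux z s) (∫ z in a..y, utx z t) t :=
      hasDerivAt_intervalIntegral_of_continuousOn hI ht
        (hux_cont.mono (prod_mono (hsub y hy) subset_rfl))
        (hutx_cont.mono (prod_mono (hsub y hy) subset_rfl))
        fun z hz s hs => hutx z (hsub y hy hz) s hs
    have hdiff := ((hut y hy t ht).sub (hut a ha t ht)).unique
      (hderiv.congr_of_eventuallyEq (eventually_of_mem (hI.mem_nhds ht) hFTC))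
    rw [← hdiff]; abel
  have hcont : ContinuousOn (utx · t) (Icc a b) := hutx_cont.uncurry_right t ht
  refine ((integral_hasDerivAt_right
    ((hcont.mono (hsub x (Ioo_subset_Icc_self hx))).intervalIntegrable)
    ((hcont.mono Ioo_subset_Icc_self).stronglyMeasurableAtFilter isOpen_Ioo x hx)
    (hcont.continuousAt (Icc_mem_nhds hx.1 hx.2))).const_add (ut a t)).congr_of_eventuallyEq ?_
  filter_upwards [Icc_mem_nhds hx.1 hx.2] with y hy using hut_eq y hy

end Calculus

section Densities

variable {E : Type*} [NormedAddCommGroup E] [InnerProductSpace ℝ E]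

-- On `ℂ`, `⟪z, w⟫ = Re (w * conj z)`.
noncomputable def energyDensity (r : ℝ) (U Ux F : E) : ℝ :=
  r ^ 2 * (‖Ux‖ ^ 2 / 4 - ‖U‖ ^ 4 / 4 + ⟪U, F⟫)

noncomputable def energyDensityDeriv (r : ℝ) (U Ut Ux Utx F Ft : E) : ℝ :=
  r ^ 2 * (⟪Ux, Utx⟫ / 2 - ‖U‖ ^ 2 * ⟪U, Ut⟫ + ⟪Ut, F⟫ + ⟪U, Ft⟫)

noncomputable def energyFlux (r γ : ℝ) (U Ut Ux : E) : ℝ :=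
  r ^ 2 * (⟪Ut, Ux⟫ + γ * ⟪U, Ux⟫) / 2

noncomputable def energyFluxDeriv (r r' γ : ℝ) (U Ut Ux Uxx Utx : E) : ℝ :=
  r * r' * (⟪Ut, Ux⟫ + γ * ⟪U, Ux⟫)
    + r ^ 2 * (⟪Utx, Ux⟫ + ⟪Ut, Uxx⟫ + γ * (‖Ux‖ ^ 2 + ⟪U, Uxx⟫)) / 2

theorem hasDerivAt_energyDensity {r s : ℝ} {U Ux F : ℝ → E} {Ut Utx Ft : E}
    (hU : HasDerivAt U Ut s) (hUx : HasDerivAt Ux Utx s) (hF : HasDerivAt F Ft s) :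
    HasDerivAt (fun s => energyDensity r (U s) (Ux s) (F s))
      (energyDensityDeriv r (U s) Ut (Ux s) Utx (F s) Ft) s := by
  have := (((hUx.norm_sq.div_const 4).fun_sub ((hU.norm_sq.fun_pow 2).div_const 4)).fun_add
    (hU.inner ℝ hF)).const_mul (r ^ 2)
  refine (this.congr_deriv ?_).congr_of_eventuallyEq (.of_forall fun y => ?_)
  · simp only [energyDensityDeriv]; rw [real_inner_comm Ut]; push_cast; ring
  · simp only [energyDensity]; ring

theorem hasDerivAt_energyFlux {ρ : ℝ → ℝ} {r' γ x : ℝ} {U Ut Ux : ℝ → E} {Uxx Utx : E}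
    (hρ : HasDerivAt ρ r' x) (hU : HasDerivAt U (Ux x) x) (hUt : HasDerivAt Ut Utx x)
    (hUx : HasDerivAt Ux Uxx x) :
    HasDerivAt (fun y => energyFlux (ρ y) γ (U y) (Ut y) (Ux y))
      (energyFluxDeriv (ρ x) r' γ (U x) (Ut x) (Ux x) Uxx Utx) x := by
  have := ((hρ.fun_pow 2).fun_mul ((hUt.inner ℝ hUx).fun_add
    ((hU.inner ℝ hUx).const_mul γ))).div_const 2
  refine this.congr_deriv ?_
  simp only [energyFluxDeriv, real_inner_self_eq_norm_sq]
  rw [real_inner_comm (Ux x) (Ut x), real_inner_comm (Ux x) (U x)]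
  push_cast
  ring

theorem energyFlux_zero_right (r γ : ℝ) (U Ut : E) : energyFlux r γ U Ut 0 = 0 := by
  simp [energyFlux]

theorem energy_remainder_le {r r' β γ R'' : ℝ} {U Ut Ux Ft : E} (hγ : 0 < γ) (hr' : |r'| ≤ β)
    (hU : ‖U‖ ^ 2 ≤ R'') :
    r ^ 2 * ⟪U, Ft⟫ - r * r' * (⟪Ut, Ux⟫ + γ * ⟪U, Ux⟫) + 3 * γ / 4 * (r ^ 2 * ‖U‖ ^ 4)
        - γ / 8 * (r ^ 2 * ‖Ux‖ ^ 2)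
      ≤ 4 * β ^ 2 / γ * ‖Ut‖ ^ 2 + 4 * γ * β ^ 2 * ‖U‖ ^ 2
        + (3 * γ * R'' / 4 + 1 / 2) * (r ^ 2 * ‖U‖ ^ 2) + 1 / 2 * (r ^ 2 * ‖Ft‖ ^ 2) := by
  set p := |r| * ‖Ux‖
  have hp : r ^ 2 * ‖Ux‖ ^ 2 = p ^ 2 := by rw [mul_pow, sq_abs]
  have hweight : ∀ V : E, -(r * r' * ⟪V, Ux⟫) ≤ β * ‖V‖ * p := fun V => by
    calc -(r * r' * ⟪V, Ux⟫) ≤ |r| * |r'| * (‖V‖ * ‖Ux‖) := by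
          rw [← abs_mul]
          exact (neg_le_abs _).trans (by rw [abs_mul]; gcongr; exact abs_real_inner_le_norm V Ux)
      _ ≤ |r| * β * (‖V‖ * ‖Ux‖) := by gcongr
      _ = β * ‖V‖ * p := by ring
  have hforce : r ^ 2 * ⟪U, Ft⟫ ≤ 1 / 2 * (r ^ 2 * ‖U‖ ^ 2) + 1 / 2 * (r ^ 2 * ‖Ft‖ ^ 2) := by
    nlinarith [real_inner_le_norm U Ft, sq_nonneg (‖U‖ - ‖Ft‖), sq_nonneg r]
  have hyoung₁ : β * ‖Ut‖ * p ≤ γ / 16 * p ^ 2 + 4 * β ^ 2 / γ * ‖Ut‖ ^ 2 := by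
    rw [← sub_nonneg]
    have : γ / 16 * p ^ 2 + 4 * β ^ 2 / γ * ‖Ut‖ ^ 2 - β * ‖Ut‖ * p
        = (γ * p / 4 - 2 * β * ‖Ut‖) ^ 2 / γ := by field_simp; ring
    rw [this]; positivity
  have hyoung₂ : β * ‖U‖ * p ≤ p ^ 2 / 16 + 4 * β ^ 2 * ‖U‖ ^ 2 := by
    nlinarith [sq_nonneg (p / 4 - 2 * β * ‖U‖)]
  have hquartic : r ^ 2 * ‖U‖ ^ 4 ≤ R'' * (r ^ 2 * ‖U‖ ^ 2) := by
    have := mul_le_mul_of_nonneg_left hU (mul_nonneg (sq_nonneg r) (sq_nonneg ‖U‖))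
    linarith
  rw [hp]
  linarith [hweight Ut, mul_le_mul_of_nonneg_left (hweight U) hγ.le,
    mul_le_mul_of_nonneg_left hyoung₂ hγ.le,
    mul_le_mul_of_nonneg_left hquartic (by positivity : (0 : ℝ) ≤ 3 * γ / 4)]

theorem energyDensityDeriv_add_eq_of_nls {r r' γ : ℝ} {U Ut Ux Uxx Utx F Ft : ℂ}
    (hpde : Complex.I * Ut + (1 / 2 : ℂ) * Uxx + (‖U‖ : ℂ) ^ 2 * U = F - Complex.I * γ * U) :
    energyDensityDeriv r U Ut Ux Utx F Ft + γ * energyDensity r U Ux F + γ / 8 * (r ^ 2 * ‖Ux‖ ^ 2)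
      = r ^ 2 * ⟪U, Ft⟫ - r * r' * (⟪Ut, Ux⟫ + γ * ⟪U, Ux⟫) + 3 * γ / 4 * (r ^ 2 * ‖U‖ ^ 4)
        - γ / 8 * (r ^ 2 * ‖Ux‖ ^ 2) + energyFluxDeriv r r' γ U Ut Ux Uxx Utx := by
  -- `hpde` says `F - Uxx / 2 - |U|² U = I (Ut + γ U)`, which is orthogonal to `Ut + γ U`
  have hcancel : ⟪Ut, F⟫ - ⟪Ut, Uxx⟫ / 2 - ‖U‖ ^ 2 * ⟪U, Ut⟫
      + γ * (⟪U, F⟫ - ⟪U, Uxx⟫ / 2 - ‖U‖ ^ 4) = 0 := by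
    obtain rfl :
        F = Complex.I * Ut + (1 / 2 : ℂ) * Uxx + (‖U‖ : ℂ) ^ 2 * U + Complex.I * γ * U := by
      linear_combination -hpde
    rw [show ‖U‖ ^ 4 = (‖U‖ ^ 2) ^ 2 by ring]
    simp only [Complex.inner, ← Complex.ofReal_pow, Complex.sq_norm, Complex.normSq_apply,
      Complex.mul_re, Complex.mul_im, Complex.add_re, Complex.add_im, Complex.I_re, Complex.I_im,
      Complex.ofReal_re, Complex.ofReal_im, Complex.conj_re, Complex.conj_im]
    norm_num
    ring
  simp only [energyDensityDeriv, energyDensity, energyFluxDeriv]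
  rw [real_inner_comm Ux Utx]
  linear_combination r ^ 2 * hcancel

end Densities

theorem integral_le_of_le_add_deriv {g v φ φ' : ℝ → ℝ} {a b : ℝ} (hab : a ≤ b)
    (hg : IntervalIntegrable g volume a b) (hv : IntervalIntegrable v volume a b)
    (hφ : ContinuousOn φ (Icc a b)) (hφ' : ∀ x ∈ Ioo a b, HasDerivAt φ (φ' x) x)
    (hφ'i : IntervalIntegrable φ' volume a b) (hend : φ a = φ b)
    (hle : ∀ x ∈ Ioo a b, g x ≤ v x + φ' x) :
    ∫ x in a..b, g x ≤ ∫ x in a..b, v x :=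
  calc ∫ x in a..b, g x ≤ ∫ x in a..b, (v x + φ' x) :=
        integral_mono_on_of_le_Ioo hab hg (hv.add hφ'i) hle
    _ = ∫ x in a..b, v x := by
        rw [integral_add hv hφ'i, integral_eq_sub_of_hasDerivAt_of_le hab hφ hφ' hφ'i, hend,
          sub_self, add_zero]

theorem integral_energy_le {a b γ β R'' : ℝ} {ρ ρ' : ℝ → ℝ} {U Ut Ux Uxx Utx F Ft : ℝ → ℂ}
    (hab : a ≤ b) (hγ : 0 < γ) (hρ : ∀ x, HasDerivAt ρ (ρ' x) x) (hρ'c : Continuous ρ')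
    (hρ'b : ∀ x, |ρ' x| ≤ β)
    (hU : ContinuousOn U (Icc a b)) (hUt : ContinuousOn Ut (Icc a b))
    (hUx : ContinuousOn Ux (Icc a b)) (hUxx : ContinuousOn Uxx (Icc a b))
    (hUtx : ContinuousOn Utx (Icc a b)) (hF : ContinuousOn F (Icc a b))
    (hFt : ContinuousOn Ft (Icc a b))
    (hU' : ∀ x ∈ Ioo a b, HasDerivAt U (Ux x) x) (hUt' : ∀ x ∈ Ioo a b, HasDerivAt Ut (Utx x) x)
    (hUx' : ∀ x ∈ Ioo a b, HasDerivAt Ux (Uxx x) x)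
    (hpde : ∀ x ∈ Ioo a b, Complex.I * Ut x + (1 / 2 : ℂ) * Uxx x + (‖U x‖ : ℂ) ^ 2 * U x
      = F x - Complex.I * γ * U x)
    (hUxa : Ux a = 0) (hUxb : Ux b = 0) (hUR : ∀ x ∈ Ioo a b, ‖U x‖ ^ 2 ≤ R'') :
    (∫ x in a..b, energyDensityDeriv (ρ x) (U x) (Ut x) (Ux x) (Utx x) (F x) (Ft x))
        + γ * (∫ x in a..b, energyDensity (ρ x) (U x) (Ux x) (F x))
        + γ / 8 * (∫ x in a..b, ρ x ^ 2 * ‖Ux x‖ ^ 2)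
      ≤ 4 * β ^ 2 / γ * (∫ x in a..b, ‖Ut x‖ ^ 2) + 4 * γ * β ^ 2 * (∫ x in a..b, ‖U x‖ ^ 2)
        + (3 * γ * R'' / 4 + 1 / 2) * (∫ x in a..b, ρ x ^ 2 * ‖U x‖ ^ 2)
        + 1 / 2 * (∫ x in a..b, ρ x ^ 2 * ‖Ft x‖ ^ 2) := by
  have hρc : Continuous ρ := continuous_iff_continuousAt.2 fun x => (hρ x).continuousAt
  have hint : ∀ g : ℝ → ℝ, ContinuousOn g (Icc a b) → IntervalIntegrable g volume a b :=
    fun g hg => hg.intervalIntegrable_of_Icc hab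
  have hE₁ := hint _ (by unfold energyDensityDeriv; fun_prop :
    ContinuousOn (fun x => energyDensityDeriv (ρ x) (U x) (Ut x) (Ux x) (Utx x) (F x) (Ft x)) _)
  have hE₂ := hint _ (by unfold energyDensity; fun_prop :
    ContinuousOn (fun x => energyDensity (ρ x) (U x) (Ux x) (F x)) _)
  have hE₃ := hint (fun x => ρ x ^ 2 * ‖Ux x‖ ^ 2) (by fun_prop)
  have hV₁ := hint (fun x => ‖Ut x‖ ^ 2) (by fun_prop)
  have hV₂ := hint (fun x => ‖U x‖ ^ 2) (by fun_prop)
  have hV₃ := hint (fun x => ρ x ^ 2 * ‖U x‖ ^ 2) (by fun_prop)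
  have hV₄ := hint (fun x => ρ x ^ 2 * ‖Ft x‖ ^ 2) (by fun_prop)
  have hflux : ContinuousOn (fun x => energyFlux (ρ x) γ (U x) (Ut x) (Ux x)) (Icc a b) := by
    unfold energyFlux; fun_prop
  have hflux' := hint _ (by unfold energyFluxDeriv; fun_prop : ContinuousOn
    (fun x => energyFluxDeriv (ρ x) (ρ' x) γ (U x) (Ut x) (Ux x) (Uxx x) (Utx x)) _)
  simp only [← intervalIntegral.integral_const_mul]
  rw [← intervalIntegral.integral_add hE₁ (hE₂.const_mul γ),
    ← intervalIntegral.integral_add (hE₁.add (hE₂.const_mul γ)) (hE₃.const_mul _),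
    ← intervalIntegral.integral_add (hV₁.const_mul _) (hV₂.const_mul _),
    ← intervalIntegral.integral_add ((hV₁.const_mul _).add (hV₂.const_mul _)) (hV₃.const_mul _),
    ← intervalIntegral.integral_add
      (((hV₁.const_mul _).add (hV₂.const_mul _)).add (hV₃.const_mul _)) (hV₄.const_mul _)]
  refine integral_le_of_le_add_deriv hab ((hE₁.add (hE₂.const_mul γ)).add (hE₃.const_mul _))
    ((((hV₁.const_mul _).add (hV₂.const_mul _)).add (hV₃.const_mul _)).add (hV₄.const_mul _))
    hflux (fun x hx => hasDerivAt_energyFlux (hρ x) (hU' x hx) (hUt' x hx) (hUx' x hx)) hflux'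
    (by rw [hUxa, hUxb, energyFlux_zero_right, energyFlux_zero_right]) fun x hx => ?_
  rw [energyDensityDeriv_add_eq_of_nls (r' := ρ' x) (hpde x hx)]
  linarith [energy_remainder_le (r := ρ x) (Ut := Ut x) (Ux := Ux x) (Ft := Ft x) hγ (hρ'b x)
    (hUR x hx)]

theorem integral_energyDensity {ρ : ℝ → ℝ} {U Ux F : ℝ → ℂ} {a b : ℝ} (hab : a ≤ b)
    (hρ : Continuous ρ) (hU : ContinuousOn U (Icc a b)) (hUx : ContinuousOn Ux (Icc a b))
    (hF : ContinuousOn F (Icc a b)) :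
    ∫ x in a..b, energyDensity (ρ x) (U x) (Ux x) (F x)
      = 1 / 4 * (∫ x in a..b, ρ x ^ 2 * ‖Ux x‖ ^ 2) - 1 / 4 * (∫ x in a..b, ρ x ^ 2 * ‖U x‖ ^ 4)
        + (∫ x in a..b, (ρ x : ℂ) ^ 2 * (F x * (starRingEnd ℂ) (U x))).re := by
  have hint : ∀ {𝕜 : Type} [RCLike 𝕜] (g : ℝ → 𝕜), ContinuousOn g (Icc a b) →
      IntervalIntegrable g volume a b := fun g hg => hg.intervalIntegrable_of_Icc hab
  have hre := intervalIntegral_re (hint (fun x => (ρ x : ℂ) ^ 2 * (F x * (starRingEnd ℂ) (U x)))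
    (by fun_prop))
  simp only [RCLike.re_to_complex] at hre
  rw [← hre, ← intervalIntegral.integral_const_mul, ← intervalIntegral.integral_const_mul,
    ← intervalIntegral.integral_sub (hint _ (by fun_prop)) (hint _ (by fun_prop)),
    ← intervalIntegral.integral_add (hint _ (by fun_prop)) (hint _ (by fun_prop))]
  refine intervalIntegral.integral_congr fun x _ => ?_
  simp only [energyDensity, Complex.inner, ← Complex.ofReal_pow, Complex.re_ofReal_mul]
  ring

theorem hasDerivAt_integral_energyDensity {ρ : ℝ → ℝ} {u ut ux utx f ft : ℝ → ℝ → ℂ}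
    {a b t : ℝ} {I : Set ℝ} (hab : a ≤ b) (hI : IsOpen I) (ht : t ∈ I) (hρ : Continuous ρ)
    (hu : ContinuousOn (fun p : ℝ × ℝ => u p.1 p.2) (Icc a b ×ˢ I))
    (hut : ContinuousOn (fun p : ℝ × ℝ => ut p.1 p.2) (Icc a b ×ˢ I))
    (hux : ContinuousOn (fun p : ℝ × ℝ => ux p.1 p.2) (Icc a b ×ˢ I))
    (hutx : ContinuousOn (fun p : ℝ × ℝ => utx p.1 p.2) (Icc a b ×ˢ I))
    (hf : ContinuousOn (fun p : ℝ × ℝ => f p.1 p.2) (Icc a b ×ˢ I))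
    (hft : ContinuousOn (fun p : ℝ × ℝ => ft p.1 p.2) (Icc a b ×ˢ I))
    (hu' : ∀ x ∈ Icc a b, ∀ s ∈ I, HasDerivAt (u x) (ut x s) s)
    (hux' : ∀ x ∈ Icc a b, ∀ s ∈ I, HasDerivAt (ux x) (utx x s) s)
    (hf' : ∀ x ∈ Icc a b, ∀ s ∈ I, HasDerivAt (f x) (ft x s) s) :
    HasDerivAt (fun s => ∫ x in a..b, energyDensity (ρ x) (u x s) (ux x s) (f x s))
      (∫ x in a..b,
        energyDensityDeriv (ρ x) (u x t) (ut x t) (ux x t) (utx x t) (f x t) (ft x t)) t := by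
  rw [← uIcc_of_le hab] at *
  exact hasDerivAt_intervalIntegral_of_continuousOn hI ht (by unfold energyDensity; fun_prop)
    (by unfold energyDensityDeriv; fun_prop) fun x hx s hs =>
      hasDerivAt_energyDensity (hu' x hx s hs) (hux' x hx s hs) (hf' x hx s hs)

theorem weighted_energy_functional_inequality_general
    (L γ β₂ : ℝ) (hL : 0 < L) (hγ : 0 < γ)
    (ρ ρ' : ℝ → ℝ)
    (hρ : ∀ x, HasDerivAt ρ (ρ' x) x) (hρ'c : Continuous ρ')
    (hρ'b : ∀ x, |ρ' x| ≤ β₂)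
    (f ft : ℝ → ℝ → ℂ)
    (hf : ContinuousOn (fun p : ℝ × ℝ => f p.1 p.2) (Set.univ ×ˢ Set.Ici 0))
    (hft : ∀ x, ∀ t > (0:ℝ), HasDerivAt (fun s => f x s) (ft x t) t)
    (hft_cont : ContinuousOn (fun p : ℝ × ℝ => ft p.1 p.2) (Set.univ ×ˢ Set.Ici 0))
    (u ut ux uxx utx : ℝ → ℝ → ℂ)
    (hu_cont : ContinuousOn (fun p : ℝ × ℝ => u p.1 p.2) (Set.Icc (-L) L ×ˢ Set.Ici 0))
    (hut_cont : ContinuousOn (fun p : ℝ × ℝ => ut p.1 p.2) (Set.Icc (-L) L ×ˢ Set.Ici 0))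
    (hux_cont : ContinuousOn (fun p : ℝ × ℝ => ux p.1 p.2) (Set.Icc (-L) L ×ˢ Set.Ici 0))
    (huxx_cont : ContinuousOn (fun p : ℝ × ℝ => uxx p.1 p.2) (Set.Icc (-L) L ×ˢ Set.Ici 0))
    (hutx_cont : ContinuousOn (fun p : ℝ × ℝ => utx p.1 p.2) (Set.Icc (-L) L ×ˢ Set.Ici 0))
    (hut : ∀ x ∈ Set.Icc (-L) L, ∀ t > (0:ℝ), HasDerivAt (fun s => u x s) (ut x t) t)
    (hux : ∀ x ∈ Set.Icc (-L) L, ∀ t ≥ (0:ℝ), HasDerivAt (fun y => u y t) (ux x t) x)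
    (huxx : ∀ x ∈ Set.Icc (-L) L, ∀ t ≥ (0:ℝ), HasDerivAt (fun y => ux y t) (uxx x t) x)
    (hutx : ∀ x ∈ Set.Icc (-L) L, ∀ t > (0:ℝ), HasDerivAt (fun s => ux x s) (utx x t) t)
    (hPDE : ∀ x ∈ Set.Ioo (-L) L, ∀ t > (0:ℝ),
      Complex.I * ut x t + (1/2 : ℂ) * uxx x t + (‖u x t‖ : ℂ)^2 * u x t
        = f x t - Complex.I * (γ : ℂ) * u x t)
    (hBC : ∀ t ≥ (0:ℝ), u (-L) t = 0 ∧ u L t = 0 ∧ ux (-L) t = 0 ∧ ux L t = 0)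
    (R R' R'' R₀ : ℝ)
    (hR : ∀ t ≥ (0:ℝ), (∫ x in (-L)..L, ‖u x t‖^2) ≤ R)
    (hR' : ∀ t ≥ (0:ℝ), (∫ x in (-L)..L, ‖ut x t‖^2) ≤ R')
    (hR'' : ∀ t ≥ (0:ℝ), ∀ x ∈ Set.Icc (-L) L, ‖u x t‖^2 ≤ R'')
    (hR₀ : ∀ t ≥ (0:ℝ), (∫ x in (-L)..L, (ρ x)^2 * ‖u x t‖^2) ≤ R₀)
    (J : ℝ → ℝ)
    (hJ : ∀ s, J s = (1/4) * (∫ x in (-L)..L, (ρ x)^2 * ‖ux x s‖^2)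
        - (1/4) * (∫ x in (-L)..L, (ρ x)^2 * ‖u x s‖^4)
        + (∫ x in (-L)..L, (ρ x : ℂ)^2 * (f x s * (starRingEnd ℂ) (u x s))).re) :
    ∀ t > (0:ℝ), ∃ J' : ℝ, HasDerivAt J J' t ∧
      J' + γ * J t + (γ/8) * (∫ x in (-L)..L, (ρ x)^2 * ‖ux x t‖^2)
        ≤ 4 * β₂^2 * R' / γ + 4 * β₂^2 * γ * R + 3 * γ * R'' * R₀ / 4 + R₀ / 2
          + (1/2) * (∫ x in (-L)..L, (ρ x)^2 * ‖ft x t‖^2) := by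
  intro t ht
  have hLL : -L ≤ L := by linarith
  have hρc : Continuous ρ := continuous_iff_continuousAt.2 fun x => (hρ x).continuousAt
  have hK : Icc (-L) L ×ˢ Ioi (0 : ℝ) ⊆ Icc (-L) L ×ˢ Ici 0 :=
    prod_mono subset_rfl Ioi_subset_Ici_self
  have hK' : Icc (-L) L ×ˢ Ioi (0 : ℝ) ⊆ univ ×ˢ Ici 0 :=
    prod_mono (subset_univ _) Ioi_subset_Ici_self
  have hJ_eq : ∀ s ≥ (0 : ℝ),
      J s = ∫ x in (-L)..L, energyDensity (ρ x) (u x s) (ux x s) (f x s) := fun s hs => by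
    rw [hJ, integral_energyDensity hLL hρc (hu_cont.uncurry_right s hs)
      (hux_cont.uncurry_right s hs) ((hf.uncurry_right s hs).mono (subset_univ _))]
  have hJ' := (hasDerivAt_integral_energyDensity hLL isOpen_Ioi ht hρc (hu_cont.mono hK)
    (hut_cont.mono hK) (hux_cont.mono hK) (hutx_cont.mono hK) (hf.mono hK') (hft_cont.mono hK')
    hut hutx fun x _ => hft x).congr_of_eventuallyEq
      (eventually_of_mem (Ioi_mem_nhds ht) fun s hs => hJ_eq s hs.le)
  have hutx' : ∀ x ∈ Ioo (-L) L, HasDerivAt (ut · t) (utx x t) x := fun x hx =>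
    hasDerivAt_swap_partials isOpen_Ioi ht (hux_cont.mono hK) (hutx_cont.mono hK) hut
      (fun y hy s hs => hux y hy s hs.le) hutx hx
  have hbound := integral_energy_le hLL hγ hρ hρ'c hρ'b (hu_cont.uncurry_right t ht.le)
    (hut_cont.uncurry_right t ht.le) (hux_cont.uncurry_right t ht.le)
    (huxx_cont.uncurry_right t ht.le) (hutx_cont.uncurry_right t ht.le)
    ((hf.uncurry_right t ht.le).mono (subset_univ _))
    ((hft_cont.uncurry_right t ht.le).mono (subset_univ _))
    (fun x hx => hux x (Ioo_subset_Icc_self hx) t ht.le) hutx'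
    (fun x hx => huxx x (Ioo_subset_Icc_self hx) t ht.le) (fun x hx => hPDE x hx t ht)
    (hBC t ht.le).2.2.1 (hBC t ht.le).2.2.2 (fun x hx => hR'' t ht.le x (Ioo_subset_Icc_self hx))
  have hR''0 : 0 ≤ R'' := (sq_nonneg _).trans (hR'' t ht.le L ⟨hLL, le_rfl⟩)
  refine ⟨_, hJ', ?_⟩
  rw [hJ_eq t ht.le]
  calc _ ≤ _ := hbound
    _ ≤ 4 * β₂ ^ 2 / γ * R' + 4 * γ * β₂ ^ 2 * R + (3 * γ * R'' / 4 + 1 / 2) * R₀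
        + 1 / 2 * (∫ x in (-L)..L, ρ x ^ 2 * ‖ft x t‖ ^ 2) := by
      gcongr
      exacts [hR' t ht.le, hR t ht.le, hR₀ t ht.le]
    _ = _ := by ring

/-- Differential inequality for the weighted energy functional
`J(t) = (1/4)∫ρ²|uₓ|² - (1/4)∫ρ²|u|⁴ + Re∫ρ² f ū` (Lemma 2.2): for a classical
solution of the damped driven NLS on `(-L,L) × (0,∞)` with `u = uₓ = 0` at
`x = ±L`, and under the uniform bounds `∫|u|² ≤ R`, `∫|uₜ|² ≤ R'`,
`supₓ|u|² ≤ R''`, `∫ρ²|u|² ≤ R₀`, `J` satisfies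
`J'(t) + γJ(t) + (γ/8)∫ρ²|uₓ|² ≤ 4β₂²R'/γ + 4β₂²γR + 3γR''R₀/4 + R₀/2 + (1/2)∫ρ²|fₜ|²`. -/
theorem weighted_energy_functional_inequality
    (L γ β₂ : ℝ) (hL : 0 < L) (hγ : 0 < γ) (hβ₂ : 0 < β₂)
    (ρ ρ' : ℝ → ℝ) (hρpos : ∀ x, 0 < ρ x)
    (hρ : ∀ x, HasDerivAt ρ (ρ' x) x) (hρ'c : Continuous ρ')
    (hρ'b : ∀ x, |ρ' x| ≤ β₂)
    (f ft : ℝ → ℝ → ℂ)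
    (hf : ContinuousOn (fun p : ℝ × ℝ => f p.1 p.2) (Set.univ ×ˢ Set.Ici 0))
    (hft : ∀ x, ∀ t > (0:ℝ), HasDerivAt (fun s => f x s) (ft x t) t)
    (hft_cont : ContinuousOn (fun p : ℝ × ℝ => ft p.1 p.2) (Set.univ ×ˢ Set.Ici 0))
    (u ut ux uxx utx : ℝ → ℝ → ℂ)
    (hu_cont : ContinuousOn (fun p : ℝ × ℝ => u p.1 p.2) (Set.Icc (-L) L ×ˢ Set.Ici 0))
    (hut_cont : ContinuousOn (fun p : ℝ × ℝ => ut p.1 p.2) (Set.Icc (-L) L ×ˢ Set.Ici 0))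
    (hux_cont : ContinuousOn (fun p : ℝ × ℝ => ux p.1 p.2) (Set.Icc (-L) L ×ˢ Set.Ici 0))
    (huxx_cont : ContinuousOn (fun p : ℝ × ℝ => uxx p.1 p.2) (Set.Icc (-L) L ×ˢ Set.Ici 0))
    (hutx_cont : ContinuousOn (fun p : ℝ × ℝ => utx p.1 p.2) (Set.Icc (-L) L ×ˢ Set.Ici 0))
    (hut : ∀ x ∈ Set.Icc (-L) L, ∀ t > (0:ℝ), HasDerivAt (fun s => u x s) (ut x t) t)
    (hux : ∀ x ∈ Set.Icc (-L) L, ∀ t ≥ (0:ℝ), HasDerivAt (fun y => u y t) (ux x t) x)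
    (huxx : ∀ x ∈ Set.Icc (-L) L, ∀ t ≥ (0:ℝ), HasDerivAt (fun y => ux y t) (uxx x t) x)
    (hutx : ∀ x ∈ Set.Icc (-L) L, ∀ t > (0:ℝ), HasDerivAt (fun s => ux x s) (utx x t) t)
    (hPDE : ∀ x ∈ Set.Ioo (-L) L, ∀ t > (0:ℝ),
      Complex.I * ut x t + (1/2 : ℂ) * uxx x t + (‖u x t‖ : ℂ)^2 * u x t
        = f x t - Complex.I * (γ : ℂ) * u x t)
    (hBC : ∀ t ≥ (0:ℝ), u (-L) t = 0 ∧ u L t = 0 ∧ ux (-L) t = 0 ∧ ux L t = 0)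
    (R R' R'' R₀ : ℝ)
    (hR : ∀ t ≥ (0:ℝ), (∫ x in (-L)..L, ‖u x t‖^2) ≤ R)
    (hR' : ∀ t ≥ (0:ℝ), (∫ x in (-L)..L, ‖ut x t‖^2) ≤ R')
    (hR'' : ∀ t ≥ (0:ℝ), ∀ x ∈ Set.Icc (-L) L, ‖u x t‖^2 ≤ R'')
    (hR₀ : ∀ t ≥ (0:ℝ), (∫ x in (-L)..L, (ρ x)^2 * ‖u x t‖^2) ≤ R₀)
    (J : ℝ → ℝ)
    (hJ : ∀ s, J s = (1/4) * (∫ x in (-L)..L, (ρ x)^2 * ‖ux x s‖^2)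
        - (1/4) * (∫ x in (-L)..L, (ρ x)^2 * ‖u x s‖^4)
        + (∫ x in (-L)..L, (ρ x : ℂ)^2 * (f x s * (starRingEnd ℂ) (u x s))).re) :
    ∀ t > (0:ℝ), ∃ J' : ℝ, HasDerivAt J J' t ∧
      J' + γ * J t + (γ/8) * (∫ x in (-L)..L, (ρ x)^2 * ‖ux x t‖^2)
        ≤ 4 * β₂^2 * R' / γ + 4 * β₂^2 * γ * R + 3 * γ * R'' * R₀ / 4 + R₀ / 2
          + (1/2) * (∫ x in (-L)..L, (ρ x)^2 * ‖ft x t‖^2) :=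
  weighted_energy_functional_inequality_general L γ β₂ hL hγ ρ ρ' hρ hρ'c hρ'b f ft hf hft hft_cont
    u ut ux uxx utx hu_cont hut_cont hux_cont huxx_cont hutx_cont hut hux huxx hutx hPDE hBC R R'
    R'' R₀ hR hR' hR'' hR₀ J hJ
end
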